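/- Let G be a group and K a normal subgroup with quotient Ḡ := G/K. Suppose the extension 1 → K → G → Ḡ → 1 admits a quasi-splitting, i.e. a set-theoretic section s: Ḡ → G of the quotient map such that the set Δ(s) := { s(ḡ₂)⁻¹ s(ḡ₁)⁻¹ s(ḡ₁ḡ₂) : ḡ₁, ḡ₂ ∈ Ḡ } is finite. Then every G-quasi-invariant quasimorphism on K is linearly (G, s(Ḡ))-controlled. -/

import Mathlib

open Monoid
open scoped Monoid.Coprod

namespace QMExt

section QM

variable {H : Type*} [Group H]

/-- A quasimorphism: a real-valued function with finite defect. -/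
def IsQM (φ : H → ℝ) : Prop := ∃ D : ℝ, ∀ g h : H, |φ g + φ h - φ (g * h)| ≤ D

/-- The defect `D(φ)` of a quasimorphism. -/
noncomputable def qmDefect (φ : H → ℝ) : ℝ :=
  sSup {r : ℝ | ∃ g h : H, r = |φ g + φ h - φ (g * h)|}

/-- An antisymmetric function: `φ(g⁻¹) = -φ(g)`. -/
def IsAntisym (φ : H → ℝ) : Prop := ∀ g : H, φ g⁻¹ = - φ g

end QM

section WordMetric

variable {Q : Type*} [Group Q]

/-- Word length of `q` with respect to the alphabet `S`. -/
noncomputable def wordLenOn (S : Set Q) (q : Q) : ℕ :=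
  sInf {n | ∃ l : List Q, (∀ y ∈ l, y ∈ S) ∧ l.prod = q ∧ l.length = n}

/-- Distance in the Cayley graph of `Q` with respect to the generating set `S`. -/
noncomputable def wordDist (S : Set Q) (g h : Q) : ℝ := (wordLenOn S (g⁻¹ * h) : ℝ)

/-- Gromov product of `x` and `y` at `w` in the Cayley graph. -/
noncomputable def gprod (S : Set Q) (x y w : Q) : ℝ :=
  (wordDist S w x + wordDist S w y - wordDist S x y) / 2

/-- The Cayley graph of `Q` w.r.t. `S` is Gromov δ-hyperbolic (four-point condition). -/
def HypWith (S : Set Q) (δ : ℝ) : Prop :=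
  ∀ w x y z : Q, min (gprod S x y w) (gprod S y z w) - δ ≤ gprod S x z w

end WordMetric

/-- A group is hyperbolic if it has a finite symmetric generating set whose
Cayley graph is Gromov hyperbolic. -/
def IsHyperbolicGroup (Q : Type*) [Group Q] : Prop :=
  ∃ S : Set Q, S.Finite ∧ (∀ s ∈ S, s⁻¹ ∈ S) ∧ Subgroup.closure S = ⊤ ∧
    ∃ δ : ℝ, 0 ≤ δ ∧ HypWith S δ

section Rel

variable {Q : Type*} [Group Q]

/-- `φ : P → ℝ` is `Q`-quasi-invariant. -/
def IsGQuasiInvariant (P : Subgroup Q) (φ : ↥P → ℝ) : Prop :=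
  ∃ D : ℝ, ∀ k₁ k₂ : ↥P, IsConj (k₁ : Q) (k₂ : Q) → |φ k₁ - φ k₂| ≤ D

/-- `D^Q(φ)`, the quasi-invariance defect of `φ : P → ℝ`. -/
noncomputable def invDefect (P : Subgroup Q) (φ : ↥P → ℝ) : ℝ :=
  sSup {r : ℝ | ∃ k₁ k₂ : ↥P, IsConj (k₁ : Q) (k₂ : Q) ∧ r = |φ k₁ - φ k₂|}

/-- A letter of the alphabet `P ⊔ Y`: either a `P`-letter, or a generator `y ∈ Y`
or its formal inverse (marked by the boolean). -/
abbrev RelLetter (P : Subgroup Q) (Y : Set Q) : Type _ := ↥P ⊕ ↥Y × Bool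

/-- Evaluation of a letter in the free product `P ∗ F(Y)`. -/
noncomputable def evalLetter (P : Subgroup Q) (Y : Set Q) :
    RelLetter P Y → (↥P ∗ FreeGroup ↥Y)
  | Sum.inl k => Coprod.inl k
  | Sum.inr (x, true) => Coprod.inr (FreeGroup.of x)
  | Sum.inr (x, false) => (Coprod.inr (FreeGroup.of x))⁻¹

/-- Evaluation of a word on the alphabet `P ⊔ Y` in the free product `P ∗ F(Y)`. -/
noncomputable def evalWord (P : Subgroup Q) (Y : Set Q) (l : List (RelLetter P Y)) :
    ↥P ∗ FreeGroup ↥Y :=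
  (l.map (evalLetter P Y)).prod

/-- The projection `η : P ∗ F(Y) → P` killing all `Y`-letters. -/
noncomputable def eta (P : Subgroup Q) (Y : Set Q) : (↥P ∗ FreeGroup ↥Y) →* ↥P :=
  Coprod.lift (MonoidHom.id ↥P) 1

/-- The evaluation map `θ : P ∗ F(Y) → Q`. -/
noncomputable def theta (P : Subgroup Q) (Y : Set Q) : (↥P ∗ FreeGroup ↥Y) →* Q :=
  Coprod.lift P.subtype (FreeGroup.lift fun y : ↥Y => (y : Q))

/-- Word length `|a|` of `a ∈ P ∗ F(Y)` over the alphabet `P ⊔ Y`. -/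
noncomputable def wordLen (P : Subgroup Q) (Y : Set Q) (a : ↥P ∗ FreeGroup ↥Y) : ℕ :=
  sInf {n | ∃ l : List (RelLetter P Y), evalWord P Y l = a ∧ l.length = n}

/-- `|a|_Y`: the number of `Y`-letters in the normal form of `a`, i.e. the least
number of `Y`-letters in a word over `P ⊔ Y` representing `a`. -/
noncomputable def xLen (P : Subgroup Q) (Y : Set Q) (a : ↥P ∗ FreeGroup ↥Y) : ℕ :=
  sInf {m | ∃ l : List (RelLetter P Y), evalWord P Y l = a ∧ l.countP Sum.isRight = m}

/-- `φ` is `(Q,Y)`-controlled by `f`. -/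
def ControlledBy (P : Subgroup Q) (Y : Set Q) (φ : ↥P → ℝ) (f : ℕ → ℝ) : Prop :=
  ∀ n : ℕ, ∀ a : ↥P ∗ FreeGroup ↥Y, a ∈ (theta P Y).ker → wordLen P Y a ≤ n →
    |φ (eta P Y a)| ≤ f n

/-- `φ` is `(Q,Y)`-controlled. -/
def Controlled (P : Subgroup Q) (Y : Set Q) (φ : ↥P → ℝ) : Prop :=
  ∃ f : ℕ → ℝ, ControlledBy P Y φ f

/-- `φ` is linearly `(Q,Y)`-controlled with constant `C₀`. -/
def LinearlyControlled (P : Subgroup Q) (Y : Set Q) (φ : ↥P → ℝ) (C₀ : ℝ) : Prop :=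
  ControlledBy P Y φ (fun n => C₀ * n + C₀)

/-- `R` is the set of relators of a relative presentation `Q = ⟨P, Y ∣ R_P, R⟩`:
`Y` is a relative generating set and `ker θ` is the normal closure of `R`. -/
def IsRelPresentation (P : Subgroup Q) (Y : Set Q) (R : Set (↥P ∗ FreeGroup ↥Y)) : Prop :=
  Function.Surjective (theta P Y) ∧ Subgroup.normalClosure R = (theta P Y).ker

/-- `f` is a relative isoperimetric function of the relative presentation with relators `R`. -/
def RelIsoperimetricFn (P : Subgroup Q) (Y : Set Q) (R : Set (↥P ∗ FreeGroup ↥Y))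
    (f : ℕ → ℝ) : Prop :=
  ∀ n : ℕ, ∀ a ∈ (theta P Y).ker, wordLen P Y a ≤ n →
    ∃ l : List ((↥P ∗ FreeGroup ↥Y) × (↥P ∗ FreeGroup ↥Y)),
      (∀ p ∈ l, p.2 ∈ R) ∧ (l.map fun p => p.1 * p.2 * p.1⁻¹).prod = a ∧ (l.length : ℝ) ≤ f n

/-- Admissible adjacent pairs in a reduced word: no two adjacent `P`-letters, and no
adjacent pair `y y⁻¹` or `y⁻¹ y` of `Y`-letters. -/
def okPair (P : Subgroup Q) (Y : Set Q) : RelLetter P Y → RelLetter P Y → Prop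
  | Sum.inl _, Sum.inl _ => False
  | Sum.inr (x, s), Sum.inr (y, t) => x = y → t ≠ !s
  | _, _ => True

/-- A reduced word on `P ⊔ Y` (the normal form of the element it represents). -/
def IsReducedWord (P : Subgroup Q) (Y : Set Q) (l : List (RelLetter P Y)) : Prop :=
  (∀ k : ↥P, Sum.inl k ∈ l → k ≠ 1) ∧ l.Chain' (okPair P Y)

/-- The relative presentation with relators `R` is bounded. -/
def BoundedRel (P : Subgroup Q) (Y : Set Q) (R : Set (↥P ∗ FreeGroup ↥Y)) : Prop :=
  ∃ B : ℕ, ∀ r ∈ R, wordLen P Y r ≤ B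

/-- The relative presentation with relators `R` is strongly bounded: the relators have
uniformly bounded length and only finitely many `P`-letters occur in them. -/
def StronglyBoundedRel (P : Subgroup Q) (Y : Set Q) (R : Set (↥P ∗ FreeGroup ↥Y)) : Prop :=
  ∃ B : ℕ, ∃ F : Set ↥P, F.Finite ∧
    ∀ r ∈ R, ∃ l : List (RelLetter P Y), IsReducedWord P Y l ∧ evalWord P Y l = r ∧
      l.length ≤ B ∧ ∀ k : ↥P, Sum.inl k ∈ l → k ∈ F

/-- `P` is hyperbolically embedded in `Q`: there are a symmetric relative generating set and
a strongly bounded relative presentation with a linear relative isoperimetric function. -/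
def IsHypEmbedded (P : Subgroup Q) : Prop :=
  ∃ Y : Set Q, (∀ y ∈ Y, y⁻¹ ∈ Y) ∧ ∃ R : Set (↥P ∗ FreeGroup ↥Y),
    IsRelPresentation P Y R ∧ StronglyBoundedRel P Y R ∧
    ∃ A B : ℝ, RelIsoperimetricFn P Y R (fun n => A * n + B)

/-- `Q` is hyperbolic relative to `P` (Osin): there is a finite relative presentation
with a linear relative isoperimetric function. -/
def IsRelHyperbolic (P : Subgroup Q) : Prop :=
  ∃ Y : Set Q, (∀ y ∈ Y, y⁻¹ ∈ Y) ∧ ∃ R : Set (↥P ∗ FreeGroup ↥Y), R.Finite ∧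
    IsRelPresentation P Y R ∧ ∃ A B : ℝ, RelIsoperimetricFn P Y R (fun n => A * n + B)

/-- `L` is a (left) transversal of `P` in `Q`: a set of coset representatives. -/
def IsTransversal (P : Subgroup Q) (L : Set Q) : Prop :=
  ∀ q : Q, ∃! l : Q, l ∈ L ∧ l⁻¹ * q ∈ P

/-- `φ̃_C(a) := φ̃(a) + C·|a|_Y`. -/
noncomputable def phitC (P : Subgroup Q) (Y : Set Q) (φ : ↥P → ℝ) (C : ℝ)
    (a : ↥P ∗ FreeGroup ↥Y) : ℝ :=
  φ (eta P Y a) + C * (xLen P Y a : ℝ)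

/-- `Φ_C(g) := inf { φ̃_C(a) ∣ θ(a) = g }`. -/
noncomputable def PhiC (P : Subgroup Q) (Y : Set Q) (φ : ↥P → ℝ) (C : ℝ) (g : Q) : ℝ :=
  sInf {r : ℝ | ∃ a : ↥P ∗ FreeGroup ↥Y, theta P Y a = g ∧ r = phitC P Y φ C a}

end Rel

section Quot

/-- Word length of an element of a free group. -/
noncomputable def freeLen {A : Type*} (w : FreeGroup A) : ℕ :=
  sInf {n | ∃ l : List (A × Bool), FreeGroup.mk l = w ∧ l.length = n}

/-- `f` is an isoperimetric function of the presentation of `Q` with generators `A`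
(mapped to `Q` by `pr`) and relators `Rb`. -/
def IsoFn {Q : Type*} [Group Q] {A : Type*} (pr : FreeGroup A →* Q)
    (Rb : Set (FreeGroup A)) (f : ℕ → ℝ) : Prop :=
  ∀ n : ℕ, ∀ w ∈ pr.ker, freeLen w ≤ n →
    ∃ l : List (FreeGroup A × FreeGroup A), (∀ p ∈ l, p.2 ∈ Rb) ∧
      (l.map fun p => p.1 * p.2 * p.1⁻¹).prod = w ∧ (l.length : ℝ) ≤ f n

variable {G : Type*} [Group G]

/-- The set of relators `R = { s(r̄)·k_r⁻¹ }` obtained by lifting the relators `R̄` of a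
presentation of `G/K` along the lift `σ` of the generators. -/
def Rlift (K : Subgroup G) {Xbar : Set (G ⧸ K)} (Rbar : Set (FreeGroup ↥Xbar))
    (σ : ↥Xbar → G) : Set (↥K ∗ FreeGroup ↥(Set.range σ)) :=
  {a | ∃ r ∈ Rbar, ∃ k : ↥K,
    theta K (Set.range σ) (Coprod.inr (FreeGroup.map (Set.rangeFactorization σ) r)) = ↑k ∧
    a = Coprod.inr (FreeGroup.map (Set.rangeFactorization σ) r) * (Coprod.inl k)⁻¹}

/-- The set of relators `T' = { w k w⁻¹ k_w⁻¹ ∣ w ∈ X*, k ∈ K }`. -/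
def Tset (K : Subgroup G) (X : Set G) : Set (↥K ∗ FreeGroup ↥X) :=
  {a | ∃ lw : List ↥X, ∃ k k' : ↥K,
    theta K X (Coprod.inr (lw.map FreeGroup.of).prod * Coprod.inl k *
      (Coprod.inr (lw.map FreeGroup.of).prod)⁻¹) = ↑k' ∧
    a = Coprod.inr (lw.map FreeGroup.of).prod * Coprod.inl k *
      (Coprod.inr (lw.map FreeGroup.of).prod)⁻¹ * (Coprod.inl k')⁻¹}

/-- The set of `(G,K)`-commutators `[g,k]` with `g ∈ G`, `k ∈ K`. -/
def commSet (G : Type*) [Group G] (K : Subgroup G) : Set G :=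
  {c | ∃ g : G, ∃ k ∈ K, c = g * k * g⁻¹ * k⁻¹}

/-- Stable word length (e.g. stable (mixed) commutator length) with respect to the
generating set `S`, as the infimum of `|gⁿ|/n`. -/
noncomputable def sclOn {G : Type*} [Group G] (S : Set G) (g : G) : ℝ :=
  ⨅ n : ℕ+, (wordLenOn S (g ^ (n : ℕ)) : ℝ) / ((n : ℕ) : ℝ)

end Quot

end QMExt
open QMExt

namespace QMAux

open QMExt Monoid
open scoped Monoid.Coprod

variable {G : Type*} [Group G] (K : Subgroup G) (X : Set G)

/-- Image of a letter in `G`. -/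
noncomputable def gLetter : RelLetter K X → G
  | Sum.inl k => (k : G)
  | Sum.inr (x, true) => (x : G)
  | Sum.inr (x, false) => (x : G)⁻¹

/-- The `X`-part of a letter. -/
noncomputable def xLetter : RelLetter K X → G
  | Sum.inl _ => 1
  | Sum.inr (x, true) => (x : G)
  | Sum.inr (x, false) => (x : G)⁻¹

/-- The `K`-part of a letter. -/
noncomputable def kLetter : RelLetter K X → ↥K
  | Sum.inl k => k
  | Sum.inr _ => 1

lemma evalWord_nil : evalWord K X [] = 1 := by simp [evalWord]

lemma evalWord_cons (a : RelLetter K X) (t : List (RelLetter K X)) :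
    evalWord K X (a :: t) = evalLetter K X a * evalWord K X t := by
  simp [evalWord]

lemma theta_evalLetter (a : RelLetter K X) :
    theta K X (evalLetter K X a) = gLetter K X a := by
  rcases a with k | ⟨x, b⟩
  · simp [evalLetter, gLetter, theta]
  · cases b <;> simp [evalLetter, gLetter, theta]

lemma eta_evalLetter (a : RelLetter K X) :
    eta K X (evalLetter K X a) = kLetter K X a := by
  rcases a with k | ⟨x, b⟩
  · simp [evalLetter, kLetter, eta]
  · cases b <;> simp [evalLetter, kLetter, eta]

lemma theta_evalWord (l : List (RelLetter K X)) :
    theta K X (evalWord K X l) = (l.map (gLetter K X)).prod := by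
  induction l with
  | nil => simp [evalWord]
  | cons a t ih =>
      rw [evalWord_cons, map_mul, theta_evalLetter, List.map_cons, List.prod_cons, ih]

lemma eta_evalWord (l : List (RelLetter K X)) :
    eta K X (evalWord K X l) = (l.map (kLetter K X)).prod := by
  induction l with
  | nil => simp [evalWord]
  | cons a t ih =>
      rw [evalWord_cons, map_mul, eta_evalLetter, List.map_cons, List.prod_cons, ih]

lemma exists_word (a : ↥K ∗ FreeGroup ↥X) :
    ∃ l : List (RelLetter K X), evalWord K X l = a := by
  induction a using Coprod.induction_on with
  | inl k => exact ⟨[Sum.inl k], by simp [evalWord, evalLetter]⟩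
  | inr w =>
      induction w using FreeGroup.induction_on with
      | C1 => exact ⟨[], by simp [evalWord]⟩
      | of x =>
          refine ⟨[Sum.inr (x, true)], ?_⟩
          show evalWord K X _ = Coprod.inr (FreeGroup.of x)
          simp [evalWord, evalLetter]
      | inv_of x _ =>
          refine ⟨[Sum.inr (x, false)], ?_⟩
          show evalWord K X _ = Coprod.inr (FreeGroup.of x)⁻¹
          simp [evalWord, evalLetter]
      | mul x y hx hy =>
          obtain ⟨lx, hlx⟩ := hx
          obtain ⟨ly, hly⟩ := hy
          refine ⟨lx ++ ly, ?_⟩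
          show evalWord K X _ = Coprod.inr (x * y)
          simp only [evalWord, List.map_append, List.prod_append] at *
          rw [hlx, hly, map_mul]
  | mul x y hx hy =>
      obtain ⟨lx, hlx⟩ := hx
      obtain ⟨ly, hly⟩ := hy
      refine ⟨lx ++ ly, ?_⟩
      simp only [evalWord, List.map_append, List.prod_append] at *
      rw [hlx, hly]

/-- Collecting lemma: a word equals its `X`-part times an element of `K` whose
`φ`-value is close to the `φ`-value of the product of its `K`-letters. -/
lemma collect [K.Normal] (φ : ↥K → ℝ) (D D' : ℝ)
    (hD0 : 0 ≤ D) (hD'0 : 0 ≤ D')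
    (hD : ∀ g h : ↥K, |φ g + φ h - φ (g * h)| ≤ D)
    (hD' : ∀ k₁ k₂ : ↥K, IsConj (k₁ : G) (k₂ : G) → |φ k₁ - φ k₂| ≤ D') :
    ∀ l : List (RelLetter K X), ∃ c : ↥K,
      (l.map (gLetter K X)).prod = (l.map (xLetter K X)).prod * (c : G) ∧
      |φ c - φ ((l.map (kLetter K X)).prod)| ≤ l.length * (2 * D + D') := by
  intro l
  induction l with
  | nil => exact ⟨1, by simp, by simp⟩
  | cons a t ih =>
      obtain ⟨c, hc, hφ⟩ := ih
      have hlen : ((a :: t).length : ℝ) = (t.length : ℝ) + 1 := by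
        push_cast [List.length_cons]; ring
      rcases a with k | ⟨x, b⟩
      · -- K letter
        set w : G := (t.map (xLetter K X)).prod with hw
        have hmem : w⁻¹ * (k : G) * w ∈ K := by
          have := (‹K.Normal›).conj_mem (k : G) k.2 w⁻¹
          simpa using this
        set k' : ↥K := ⟨w⁻¹ * (k : G) * w, hmem⟩ with hk'
        refine ⟨k' * c, ?_, ?_⟩
        · simp only [List.map_cons, List.prod_cons]
          have : (gLetter K X (Sum.inl k)) = (k : G) := rfl
          rw [this, hc]
          have hx1 : xLetter K X (Sum.inl k) = 1 := rfl
          rw [hx1]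
          have hco : ((k' * c : ↥K) : G) = (w⁻¹ * (k : G) * w) * (c : G) := rfl
          rw [hco]
          rw [← hw]
          group
        · simp only [List.map_cons, List.prod_cons]
          have hkl : kLetter K X (Sum.inl k) = k := rfl
          rw [hkl]
          set p : ↥K := (t.map (kLetter K X)).prod
          have h1 : |φ k' + φ c - φ (k' * c)| ≤ D := hD k' c
          have h2 : |φ k' - φ k| ≤ D' := by
            refine hD' k' k ?_
            rw [isConj_iff]
            exact ⟨w, by have : ((k' : ↥K) : G) = w⁻¹ * (k : G) * w := rfl; rw [this]; group⟩
          have h4 : |φ k + φ p - φ (k * p)| ≤ D := hD k p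
          rw [abs_le] at h1 h2 h4 ⊢
          rw [abs_le] at hφ
          rw [hlen]
          constructor <;> nlinarith [h1.1, h1.2, h2.1, h2.2, h4.1, h4.2, hφ.1, hφ.2]
      · -- X letter
        refine ⟨c, ?_, ?_⟩
        · simp only [List.map_cons, List.prod_cons]
          have hgx : gLetter K X (Sum.inr (x, b)) = xLetter K X (Sum.inr (x, b)) := by
            cases b <;> rfl
          rw [hgx, hc, mul_assoc]
        · simp only [List.map_cons, List.prod_cons]
          have hkl : kLetter K X (Sum.inr (x, b)) = 1 := rfl
          rw [hkl, one_mul, hlen]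
          have : (0:ℝ) ≤ 2 * D + D' := by linarith
          nlinarith [hφ]

/-- Reduction of a product of `s`-letters to `s q * k` with controlled `φ k`. -/
lemma xpartReduce {G : Type*} [Group G] (K : Subgroup G) [K.Normal]
    (s : G ⧸ K → G) (hs : ∀ q : G ⧸ K, ((s q : G) : G ⧸ K) = q)
    (φ : ↥K → ℝ) (D D' M : ℝ)
    (hD0 : 0 ≤ D) (hD'0 : 0 ≤ D') (hM0 : 0 ≤ M)
    (hD : ∀ g h : ↥K, |φ g + φ h - φ (g * h)| ≤ D)
    (hD' : ∀ k₁ k₂ : ↥K, IsConj (k₁ : G) (k₂ : G) → |φ k₁ - φ k₂| ≤ D')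
    (hM : ∀ k : ↥K,
      ((∃ g₁ g₂ : G ⧸ K, (k : G) = ((s g₂)⁻¹ * (s g₁)⁻¹ * s (g₁ * g₂))⁻¹) ∨
       (∃ g₁ g₂ : G ⧸ K, (k : G) = ((s g₂)⁻¹ * (s g₁)⁻¹ * s (g₁ * g₂)) * (s 1)⁻¹) ∨
       (k : G) = (s 1)⁻¹ ∨ (k : G) = s 1) → |φ k| ≤ M) :
    ∀ l : List (RelLetter K (Set.range s)), ∃ q : G ⧸ K, ∃ k : ↥K,
      (l.map (xLetter K (Set.range s))).prod = s q * (k : G) ∧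
      |φ k| ≤ l.length * (2 * M + 2 * D + D') + M := by
  have hdd : ∀ g₁ g₂ : G ⧸ K, (s g₂)⁻¹ * (s g₁)⁻¹ * s (g₁ * g₂) ∈ K := by
    intro g₁ g₂
    rw [← QuotientGroup.eq_one_iff]
    simp only [QuotientGroup.mk_mul, QuotientGroup.mk_inv, hs]
    group
  have hs1 : (s 1 : G) ∈ K := by
    rw [← QuotientGroup.eq_one_iff]; exact hs 1
  intro l
  induction l with
  | nil =>
      refine ⟨1, ⟨(s 1)⁻¹, K.inv_mem hs1⟩, by simp, ?_⟩
      have := hM ⟨(s 1)⁻¹, K.inv_mem hs1⟩ (Or.inr (Or.inr (Or.inl rfl)))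
      simpa using this
  | cons a t ih =>
      obtain ⟨q', k', hk', hb⟩ := ih
      have hlen : ((a :: t).length : ℝ) = (t.length : ℝ) + 1 := by
        push_cast [List.length_cons]; ring
      have hC0 : (0:ℝ) ≤ 2 * M + 2 * D + D' := by linarith
      rcases a with k | ⟨x, b⟩
      · -- K letter contributes trivially to the X part
        refine ⟨q', k', ?_, ?_⟩
        · simp only [List.map_cons, List.prod_cons]
          rw [show xLetter K (Set.range s) (Sum.inl k) = 1 from rfl, one_mul, hk']
        · rw [hlen]; nlinarith [hb]
      · obtain ⟨p, hp⟩ := x.2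
        cases b
        · -- inverse letter  (s p)⁻¹
          have hκmem : (s p⁻¹)⁻¹ * (s p)⁻¹ ∈ K := by
            rw [← QuotientGroup.eq_one_iff]
            simp only [QuotientGroup.mk_mul, QuotientGroup.mk_inv, hs]
            group
          set κ : ↥K := ⟨(s p⁻¹)⁻¹ * (s p)⁻¹, hκmem⟩ with hκ
          have hκcmem : (s q')⁻¹ * (κ : G) * s q' ∈ K := by
            have := (‹K.Normal›).conj_mem (κ : G) κ.2 (s q')⁻¹
            simpa using this
          set κc : ↥K := ⟨(s q')⁻¹ * (κ : G) * s q', hκcmem⟩ with hκc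
          set dk : ↥K := ⟨(s q')⁻¹ * (s p⁻¹)⁻¹ * s (p⁻¹ * q'), hdd p⁻¹ q'⟩ with hdk
          refine ⟨p⁻¹ * q', dk⁻¹ * (κc * k'), ?_, ?_⟩
          · simp only [List.map_cons, List.prod_cons]
            rw [show xLetter K (Set.range s) (Sum.inr (x, false)) = (x : G)⁻¹ from rfl,
              ← hp, hk']
            have hco : ((dk⁻¹ * (κc * k') : ↥K) : G)
                = ((s q')⁻¹ * (s p⁻¹)⁻¹ * s (p⁻¹ * q'))⁻¹ *
                  (((s q')⁻¹ * ((s p⁻¹)⁻¹ * (s p)⁻¹) * s q') * (k' : G)) := rfl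
            rw [hco]
            group
          · have h1 : |φ dk⁻¹| ≤ M := hM dk⁻¹ (Or.inl ⟨p⁻¹, q', rfl⟩)
            have hκM : |φ κ| ≤ M := by
              refine hM κ (Or.inr (Or.inl ⟨p, p⁻¹, ?_⟩))
              show (s p⁻¹)⁻¹ * (s p)⁻¹ = (s p⁻¹)⁻¹ * (s p)⁻¹ * s (p * p⁻¹) * (s 1)⁻¹
              rw [mul_inv_cancel]
              group
            have h2 : |φ κc - φ κ| ≤ D' := by
              refine hD' κc κ ?_
              rw [isConj_iff]
              refine ⟨s q', ?_⟩
              show s q' * ((s q')⁻¹ * (κ : G) * s q') * (s q')⁻¹ = (κ : G)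
              group
            have h3 : |φ κc + φ k' - φ (κc * k')| ≤ D := hD κc k'
            have h4 : |φ dk⁻¹ + φ (κc * k') - φ (dk⁻¹ * (κc * k'))| ≤ D := hD dk⁻¹ (κc * k')
            rw [abs_le] at h1 hκM h2 h3 h4 ⊢
            rw [abs_le] at hb
            rw [hlen]
            constructor <;>
              nlinarith [h1.1, h1.2, hκM.1, hκM.2, h2.1, h2.2, h3.1, h3.2, h4.1, h4.2,
                hb.1, hb.2]
        · -- positive letter  s p
          set dk : ↥K := ⟨(s q')⁻¹ * (s p)⁻¹ * s (p * q'), hdd p q'⟩ with hdk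
          refine ⟨p * q', dk⁻¹ * k', ?_, ?_⟩
          · simp only [List.map_cons, List.prod_cons]
            rw [show xLetter K (Set.range s) (Sum.inr (x, true)) = (x : G) from rfl, ← hp, hk']
            have hco : ((dk⁻¹ * k' : ↥K) : G)
                = ((s q')⁻¹ * (s p)⁻¹ * s (p * q'))⁻¹ * (k' : G) := rfl
            rw [hco]
            group
          · have h1 : |φ dk⁻¹| ≤ M := by
              refine hM dk⁻¹ (Or.inl ⟨p, q', ?_⟩)
              rfl
            have h2 : |φ dk⁻¹ + φ k' - φ (dk⁻¹ * k')| ≤ D := hD dk⁻¹ k'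
            rw [abs_le] at h1 h2 ⊢
            rw [abs_le] at hb
            rw [hlen]
            constructor <;> nlinarith [h1.1, h1.2, h2.1, h2.2, hb.1, hb.2]

end QMAux


/-- If `1 → K → G → Ḡ → 1` admits a quasi-splitting `s : Ḡ → G`, then every
`G`-quasi-invariant quasimorphism on `K` is linearly `(G, s(Ḡ))`-controlled. -/
theorem controlled_of_quasi_splitting {G : Type*} [Group G] (K : Subgroup G) [K.Normal]
    (s : G ⧸ K → G) (hs : ∀ q : G ⧸ K, QuotientGroup.mk' K (s q) = q)
    (hΔ : Set.Finite
      {d : G | ∃ g₁ g₂ : G ⧸ K, d = (s g₂)⁻¹ * (s g₁)⁻¹ * s (g₁ * g₂)})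
    (φ : ↥K → ℝ) (hqm : IsQM φ) (hqi : IsGQuasiInvariant K φ) :
    ∃ C₀ : ℝ, 0 < C₀ ∧ LinearlyControlled K (Set.range s) φ C₀ := by
  classical
  obtain ⟨D₀, hD₀⟩ := hqm
  obtain ⟨D₁, hD₁⟩ := hqi
  set D : ℝ := max D₀ 0 with hDdef
  set D' : ℝ := max D₁ 0 with hD'def
  have hD0 : 0 ≤ D := le_max_right _ _
  have hD'0 : 0 ≤ D' := le_max_right _ _
  have hDb : ∀ g h : ↥K, |φ g + φ h - φ (g * h)| ≤ D :=
    fun g h => (hD₀ g h).trans (le_max_left _ _)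
  have hD'b : ∀ k₁ k₂ : ↥K, IsConj (k₁ : G) (k₂ : G) → |φ k₁ - φ k₂| ≤ D' :=
    fun k₁ k₂ h => (hD₁ k₁ k₂ h).trans (le_max_left _ _)
  have hs' : ∀ q : G ⧸ K, ((s q : G) : G ⧸ K) = q := fun q => by
    rw [← QuotientGroup.mk'_apply]; exact hs q
  -- the finite set governing the constant M
  set Δ : Set G := {d : G | ∃ g₁ g₂ : G ⧸ K, d = (s g₂)⁻¹ * (s g₁)⁻¹ * s (g₁ * g₂)} with hΔdef
  set S : Set G :=
    (fun d => d⁻¹) '' Δ ∪ ((fun d => d * (s 1)⁻¹) '' Δ ∪ {(s 1)⁻¹, s 1}) with hSdef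
  have hSfin : S.Finite :=
    (hΔ.image _).union ((hΔ.image _).union ((Set.finite_singleton _).insert _))
  have hKfin : {k : ↥K | (k : G) ∈ S}.Finite := by
    have heq : {k : ↥K | (k : G) ∈ S} = (Subtype.val : ↥K → G) ⁻¹' S := rfl
    rw [heq]
    exact Set.Finite.preimage Subtype.val_injective.injOn hSfin
  obtain ⟨M₀, hM₀⟩ := (hKfin.image fun k => |φ k|).bddAbove
  set M : ℝ := max M₀ 0 with hMdef
  have hM0 : 0 ≤ M := le_max_right _ _
  have hMb : ∀ k : ↥K, (k : G) ∈ S → |φ k| ≤ M := fun k hk =>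
    le_trans (hM₀ (Set.mem_image_of_mem _ hk)) (le_max_left _ _)
  have hM : ∀ k : ↥K,
      ((∃ g₁ g₂ : G ⧸ K, (k : G) = ((s g₂)⁻¹ * (s g₁)⁻¹ * s (g₁ * g₂))⁻¹) ∨
       (∃ g₁ g₂ : G ⧸ K, (k : G) = ((s g₂)⁻¹ * (s g₁)⁻¹ * s (g₁ * g₂)) * (s 1)⁻¹) ∨
       (k : G) = (s 1)⁻¹ ∨ (k : G) = s 1) → |φ k| ≤ M := by
    intro k hk
    apply hMb
    rcases hk with ⟨g₁, g₂, h⟩ | ⟨g₁, g₂, h⟩ | h | h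
    · exact Or.inl ⟨_, ⟨g₁, g₂, rfl⟩, h.symm⟩
    · exact Or.inr (Or.inl ⟨_, ⟨g₁, g₂, rfl⟩, h.symm⟩)
    · exact Or.inr (Or.inr (by rw [h]; exact Set.mem_insert _ _))
    · exact Or.inr (Or.inr (by rw [h]; exact Set.mem_insert_of_mem _ rfl))
  -- the constants
  set C₁ : ℝ := 2 * D + D' with hC₁def
  set C₂ : ℝ := 2 * M + 2 * D + D' with hC₂def
  have hφ1 : 0 ≤ |φ 1| := abs_nonneg _
  set C₀ : ℝ := C₁ + C₂ + 2 * M + 3 * D + 2 * |φ 1| + 1 with hC₀def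
  have hC₀pos : 0 < C₀ := by rw [hC₀def, hC₁def, hC₂def]; linarith
  refine ⟨C₀, hC₀pos, ?_⟩
  intro n a ha hlena
  show |φ (eta K (Set.range s) a)| ≤ C₀ * n + C₀
  -- extract a geodesic word representing a
  have hne : {m | ∃ l : List (RelLetter K (Set.range s)),
      evalWord K (Set.range s) l = a ∧ l.length = m}.Nonempty := by
    obtain ⟨l, hl⟩ := QMAux.exists_word K (Set.range s) a
    exact ⟨l.length, l, hl, rfl⟩
  obtain ⟨l, hl, hllen⟩ := Nat.sInf_mem hne
  have hl_n : l.length ≤ n := by rw [hllen]; exact hlena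
  -- θ(a) = 1
  have hg1 : (l.map (QMAux.gLetter K (Set.range s))).prod = 1 := by
    rw [← QMAux.theta_evalWord, hl]
    exact ha
  obtain ⟨c, hcprod, hcφ⟩ := QMAux.collect K (Set.range s) φ D D' hD0 hD'0 hDb hD'b l
  have hxp : (l.map (QMAux.xLetter K (Set.range s))).prod = (c : G)⁻¹ :=
    eq_inv_of_mul_eq_one_left (by rw [← hcprod, hg1])
  obtain ⟨q, k, hqk, hkb⟩ :=
    QMAux.xpartReduce K s hs' φ D D' M hD0 hD'0 hM0 hDb hD'b hM l
  -- the quotient part is trivial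
  have hk1 : ((k : G) : G ⧸ K) = 1 := (QuotientGroup.eq_one_iff _).mpr k.2
  have hq1 : q = 1 := by
    have h1 : ((s q * (k : G) : G) : G ⧸ K) = 1 := by
      rw [← hqk, hxp]
      exact (QuotientGroup.eq_one_iff _).mpr (K.inv_mem c.2)
    rw [QuotientGroup.mk_mul, hs', hk1, mul_one] at h1
    exact h1
  have hs1mem : (s 1 : G) ∈ K := (QuotientGroup.eq_one_iff _).mp (hs' 1)
  set s1 : ↥K := ⟨s 1, hs1mem⟩ with hs1def
  have hceq : (c⁻¹ : ↥K) = s1 * k := by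
    apply Subtype.ext
    show ((c : G))⁻¹ = s 1 * (k : G)
    rw [← hxp, hqk, hq1]
  -- assemble the bounds
  have b1 : |φ s1| ≤ M := hMb s1 (Or.inr (Or.inr (Set.mem_insert_of_mem _ rfl)))
  have b2 : |φ s1 + φ k - φ (s1 * k)| ≤ D := hDb s1 k
  have b3 : |φ c + φ c⁻¹ - φ (c * c⁻¹)| ≤ D := hDb c c⁻¹
  rw [mul_inv_cancel] at b3
  rw [hceq] at b3
  have hηa : eta K (Set.range s) a = (l.map (QMAux.kLetter K (Set.range s))).prod := by
    rw [← hl, QMAux.eta_evalWord]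
  rw [hηa]
  set L : ℝ := (l.length : ℝ) with hLdef
  have hL0 : (0 : ℝ) ≤ L := Nat.cast_nonneg _
  have hLn : L ≤ (n : ℝ) := by rw [hLdef]; exact_mod_cast hl_n
  have hn0 : (0 : ℝ) ≤ (n : ℝ) := Nat.cast_nonneg _
  have hCsum : (0 : ℝ) ≤ C₁ + C₂ := by rw [hC₁def, hC₂def]; linarith
  have hmul : L * (C₁ + C₂) ≤ (n : ℝ) * (C₁ + C₂) := mul_le_mul_of_nonneg_right hLn hCsum
  have hC12leC0 : C₁ + C₂ ≤ C₀ := by rw [hC₀def]; linarith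
  have hmul2 : (n : ℝ) * (C₁ + C₂) ≤ (n : ℝ) * C₀ := mul_le_mul_of_nonneg_left hC12leC0 hn0
  have hexp : L * (C₁ + C₂) = L * C₁ + L * C₂ := by ring
  have hcomm : (n : ℝ) * C₀ = C₀ * (n : ℝ) := mul_comm _ _
  have hconst : C₁ + C₂ + 2 * M + 3 * D + 2 * |φ 1| + 1 = C₀ := hC₀def.symm
  have hC₁0 : (0:ℝ) ≤ C₁ := by rw [hC₁def]; linarith
  have hC₂0 : (0:ℝ) ≤ C₂ := by rw [hC₂def]; linarith
  rw [← hC₁def] at hcφ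
  rw [← hC₂def] at hkb
  rw [abs_le] at hcφ hkb b1 b2 b3 ⊢
  constructor <;>
    linarith [hcφ.1, hcφ.2, hkb.1, hkb.2, b1.1, b1.2, b2.1, b2.2, b3.1, b3.2,
      hmul, hmul2, hexp, hcomm, hconst, hC₁0, hC₂0, hL0, hφ1, hM0, hD0, hD'0,
      le_abs_self (φ 1), neg_abs_le (φ 1)]
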